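/- arXiv:2504.19426 — 2 statements merged into one kernel-verified Lean document; each statement's English description precedes it below -/
import Mathlib

section
/- Let d ∈ ℕ, κ ∈ (0,∞), K ∈ (κ,∞), let g : ℝ^d → ℝ^d be continuous and differentiable at 0, assume g(0) = 0, that the Jacobian (∇g)(0) is symmetric, and that κ I_d ⪯ (∇g)(0) ⪯ K I_d, let γ ∈ (0, 1/sqrt(κK)], α = ((1 − γκ)/(1 + γκ))², let Γ_1, Γ_2, ... ∈ (0,∞)^d and m_0, m_1, ..., Θ_0, Θ_1, ... ∈ ℝ^d satisfy for all n ∈ ℕ that m_n = α m_{n−1} + (1−α) g(Θ_{n−1}) and Θ_n = Θ_{n−1} − Γ_n ⊙ m_n, and assume lim_{n→∞} Γ_n = γ𝟙_d and lim_{n→∞} Θ_n = 0. Then for every δ > 0 there exists C > 0 such that for all n ∈ ℕ_0 it holds that ‖Θ_n‖ ≤ C · (sqrt(α) + δ)^n. -/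
open Filter Asymptotics
open scoped Topology RealInnerProductSpace

noncomputable section

/-- Componentwise (Hadamard) product of two vectors. -/
def had {d : ℕ} (x y : EuclideanSpace ℝ (Fin d)) : EuclideanSpace ℝ (Fin d) :=
  WithLp.toLp 2 (fun i => x i * y i)

/-- The all-ones vector. -/
def ones (d : ℕ) : EuclideanSpace ℝ (Fin d) := WithLp.toLp 2 (fun _ => 1)

/-!
Write `z n = (m n, Θ n)`. Near the origin the iteration reads `z (n + 1) = T (z n) + o(‖z n‖)`,
where `T` is the linear momentum map built from `H = (∇g)(0)` and the limiting learning rate `γ`.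
In an eigenbasis of `H`, `T` splits into `2 × 2` blocks with determinant `α` and trace
`1 + α - (1 - α) γ μ` for the eigenvalue `μ ∈ [κ, K]`. The step-size condition
`γ ≤ 1 / √(κ K)` makes this trace at most `2 √α` in absolute value. By Cayley–Hamilton the
`n`-th power of a block is a combination of the block and the identity whose coefficients are
Lucas sequences of size `(n + 1) √α ^ n`, so `‖T ^ n‖ ≤ C ρ ^ n` for every `ρ > √α`.
In the adapted norm `⨆ n, ‖T ^ n x‖ / ρ ^ n` the map `T` contracts by `ρ`, so the `o(‖z n‖)`
perturbation only raises the rate to any `σ > ρ`.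
-/

def lucasU (t a : ℝ) : ℕ → ℝ
  | 0 => 0
  | 1 => 1
  | n + 2 => t * lucasU t a (n + 1) - a * lucasU t a n

theorem lucasU_succ_sq_sub (t a : ℝ) (n : ℕ) :
    lucasU t a (n + 1) ^ 2 - t * lucasU t a (n + 1) * lucasU t a n + a * lucasU t a n ^ 2
      = a ^ n := by
  induction n with
  | zero => simp [lucasU]
  | succ n ih =>
    simp only [lucasU, pow_succ]
    linear_combination a * ih

theorem abs_lucasU_succ_le {t a : ℝ} (ht : t ^ 2 ≤ 4 * a) (n : ℕ) :
    |lucasU t a (n + 1)| ≤ (n + 1) * √a ^ n := by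
  have ha : 0 ≤ a := by nlinarith [sq_nonneg t]
  have ht' : |t / 2| ≤ √a := Real.abs_le_sqrt (by linarith [div_pow t 2 2])
  -- completing the square in `lucasU_succ_sq_sub`, using `t ^ 2 ≤ 4 * a`
  have hsq (k : ℕ) : |lucasU t a (k + 1) - t / 2 * lucasU t a k| ≤ √a ^ k := by
    apply abs_le_of_sq_le_sq _ (by positivity)
    rw [← pow_mul, pow_mul', Real.sq_sqrt ha]
    nlinarith [lucasU_succ_sq_sub t a k, sq_nonneg (lucasU t a k)]
  induction n with
  | zero => simp [lucasU]
  | succ n ih =>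
    calc |lucasU t a (n + 2)|
        ≤ |lucasU t a (n + 2) - t / 2 * lucasU t a (n + 1)| + |t / 2| * |lucasU t a (n + 1)| := by
          rw [← abs_mul]
          linarith [abs_sub_abs_le_abs_sub (lucasU t a (n + 2)) (t / 2 * lucasU t a (n + 1))]
      _ ≤ √a ^ (n + 1) + √a * ((n + 1) * √a ^ n) := by gcongr; exact hsq (n + 1)
      _ = (↑(n + 1) + 1) * √a ^ (n + 1) := by push_cast; ring

theorem pow_succ_eq_lucasU {R : Type*} [Ring R] [Algebra ℝ R] {M : R} {t a : ℝ}
    (hM : M ^ 2 = t • M - a • 1) (n : ℕ) :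
    M ^ (n + 1) = lucasU t a (n + 1) • M - (a * lucasU t a n) • 1 := by
  induction n with
  | zero => simp [lucasU]
  | succ n ih =>
    rw [pow_succ, ih, sub_mul, smul_mul_assoc, smul_mul_assoc, one_mul, ← sq, hM]
    simp only [lucasU]
    module

theorem mul_abs_lucasU_le {t a : ℝ} (ht : t ^ 2 ≤ 4 * a) (ha : a ≤ 1) (n : ℕ) :
    a * |lucasU t a n| ≤ (n + 1) * √a ^ n := by
  have ha0 : 0 ≤ a := by nlinarith [sq_nonneg t]
  cases n with
  | zero => simp [lucasU]
  | succ n =>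
    calc a * |lucasU t a (n + 1)| ≤ √a ^ 2 * ((n + 1) * √a ^ n) := by
          rw [Real.sq_sqrt ha0]; gcongr; exact abs_lucasU_succ_le ht n
      _ = √a * ((n + 1) * √a ^ (n + 1)) := by ring
      _ ≤ 1 * ((n + 1 + 1) * √a ^ (n + 1)) := by
          gcongr
          · exact Real.sqrt_le_one.mpr ha
          · linarith
      _ = (↑(n + 1) + 1) * √a ^ (n + 1) := by push_cast; ring

section PowerBound

variable {V : Type*} [SeminormedAddCommGroup V] [NormedSpace ℝ V] {T : Module.End ℝ V} {t a L : ℝ}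

theorem norm_pow_succ_apply_le (hT : T ^ 2 = t • T - a • 1) (ht : t ^ 2 ≤ 4 * a) (ha : a ≤ 1)
    (hL : ∀ x, ‖T x‖ ≤ L * ‖x‖) (n : ℕ) (x : V) :
    ‖(T ^ (n + 1)) x‖ ≤ (L + 1) * (n + 1) * √a ^ n * ‖x‖ := by
  have ha0 : 0 ≤ a := by nlinarith [sq_nonneg t]
  calc ‖(T ^ (n + 1)) x‖ = ‖lucasU t a (n + 1) • T x - (a * lucasU t a n) • x‖ := by
        rw [pow_succ_eq_lucasU hT]; rfl
    _ ≤ |lucasU t a (n + 1)| * (L * ‖x‖) + a * |lucasU t a n| * ‖x‖ := by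
        refine (norm_sub_le _ _).trans ?_
        rw [norm_smul, norm_smul, Real.norm_eq_abs, Real.norm_eq_abs, abs_mul, abs_of_nonneg ha0]
        gcongr
        exact hL x
    _ ≤ (n + 1) * √a ^ n * (L * ‖x‖) + (n + 1) * √a ^ n * ‖x‖ := by
        have hLx : 0 ≤ L * ‖x‖ := (norm_nonneg _).trans (hL x)
        gcongr ?_ * _ + ?_ * _
        exacts [abs_lucasU_succ_le ht n, mul_abs_lucasU_le ht ha n]
    _ = (L + 1) * (n + 1) * √a ^ n * ‖x‖ := by ring

theorem sqrt_mul_norm_pow_apply_le (hT : T ^ 2 = t • T - a • 1) (ht : t ^ 2 ≤ 4 * a)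
    (ha : a ≤ 1) (hL : ∀ x, ‖T x‖ ≤ L * ‖x‖) (n : ℕ) (x : V) :
    √a * ‖(T ^ n) x‖ ≤ (L + 1) * (n + 1) * √a ^ n * ‖x‖ := by
  have hLx : 0 ≤ L * ‖x‖ := (norm_nonneg _).trans (hL x)
  have hrx : √a * ‖x‖ ≤ ‖x‖ :=
    mul_le_of_le_one_left (norm_nonneg x) (Real.sqrt_le_one.mpr ha)
  cases n with
  | zero =>
    simp only [pow_zero, Module.End.one_apply, CharP.cast_eq_zero, zero_add, mul_one]
    linarith [add_mul L 1 ‖x‖]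
  | succ n =>
    calc √a * ‖(T ^ (n + 1)) x‖ ≤ √a * ((L + 1) * (n + 1) * √a ^ n * ‖x‖) := by
          gcongr; exact norm_pow_succ_apply_le hT ht ha hL n x
      _ = (n + 1) * ((L + 1) * ‖x‖ * √a ^ (n + 1)) := by ring
      _ ≤ (n + 1 + 1) * ((L + 1) * ‖x‖ * √a ^ (n + 1)) := by
          have : 0 ≤ (L + 1) * ‖x‖ := by linarith [add_mul L 1 ‖x‖, norm_nonneg x]
          gcongr; linarith
      _ = (L + 1) * (↑(n + 1) + 1) * √a ^ (n + 1) * ‖x‖ := by push_cast; ring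

end PowerBound

theorem exists_add_one_mul_pow_le {r ρ : ℝ} (hr : 0 ≤ r) (hrρ : r < ρ) :
    ∃ C, ∀ n : ℕ, (n + 1) * r ^ n ≤ C * ρ ^ n := by
  have hρ : 0 < ρ := hr.trans_lt hrρ
  have hq : r / ρ < 1 := (div_lt_one hρ).2 hrρ
  have hlim : Tendsto (fun n : ℕ => (n + 1) * (r / ρ) ^ n) atTop (𝓝 0) := by
    simpa [add_mul] using (tendsto_self_mul_const_pow_of_lt_one (by positivity) hq).add
      (tendsto_pow_atTop_nhds_zero_of_lt_one (by positivity) hq)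
  obtain ⟨C, hC⟩ := hlim.bddAbove_range
  refine ⟨C, fun n => ?_⟩
  have hn : (n + 1) * (r / ρ) ^ n ≤ C := hC ⟨n, rfl⟩
  rwa [div_pow, mul_div_assoc', div_le_iff₀ (by positivity)] at hn

@[ext]
theorem WithLp.prod_ext {p : ENNReal} {α β : Type*} {x y : WithLp p (α × β)}
    (h₁ : x.fst = y.fst) (h₂ : x.snd = y.snd) : x = y :=
  WithLp.ofLp_injective p (Prod.ext h₁ h₂)

theorem WithLp.norm_le_norm_fst_add_norm_snd {α β : Type*} [SeminormedAddCommGroup α]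
    [SeminormedAddCommGroup β] (x : WithLp 2 (α × β)) : ‖x‖ ≤ ‖x.fst‖ + ‖x.snd‖ := by
  have h := WithLp.prod_norm_sq_eq_of_L2 x
  nlinarith [norm_nonneg x.fst, norm_nonneg x.snd, norm_nonneg x,
    mul_nonneg (norm_nonneg x.fst) (norm_nonneg x.snd)]

theorem Asymptotics.IsLittleO.toLp_prod {ι α β F : Type*} [SeminormedAddCommGroup α]
    [SeminormedAddCommGroup β] [NormedAddCommGroup F] {l : Filter ι} {a : ι → α} {b : ι → β}
    {f : ι → F} (ha : a =o[l] f) (hb : b =o[l] f) : (fun n => WithLp.toLp 2 (a n, b n)) =o[l] f := by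
  refine (IsBigO.of_bound 1 (.of_forall fun n => ?_)).trans_isLittleO
    (ha.norm_left.add hb.norm_left)
  simpa [abs_of_nonneg, add_nonneg] using
    WithLp.norm_le_norm_fst_add_norm_snd (WithLp.toLp 2 (a n, b n))

section Momentum

variable {E : Type*} [AddCommGroup E] [Module ℝ E]

-- The iteration for `(m, Θ)` with `g` replaced by its linearisation `H` and `Γ` by `γ • ones d`.
def momentumMap (α γ : ℝ) (H : E →ₗ[ℝ] E) : Module.End ℝ (WithLp 2 (E × E)) where
  toFun z := WithLp.toLp 2
    (α • z.fst + (1 - α) • H z.snd, z.snd - γ • (α • z.fst + (1 - α) • H z.snd))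
  map_add' x y := by
    ext <;> simp only [WithLp.add_fst, WithLp.add_snd, map_add, WithLp.toLp_fst,
      WithLp.toLp_snd] <;> module
  map_smul' c x := by
    ext <;> simp only [WithLp.smul_fst, WithLp.smul_snd, map_smul, WithLp.toLp_fst,
      WithLp.toLp_snd, RingHom.id_apply] <;> module

@[simp]
theorem momentumMap_apply_fst (α γ : ℝ) (H : E →ₗ[ℝ] E) (z : WithLp 2 (E × E)) :
    (momentumMap α γ H z).fst = α • z.fst + (1 - α) • H z.snd := rfl

@[simp]
theorem momentumMap_apply_snd (α γ : ℝ) (H : E →ₗ[ℝ] E) (z : WithLp 2 (E × E)) :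
    (momentumMap α γ H z).snd = z.snd - γ • (α • z.fst + (1 - α) • H z.snd) := rfl

theorem momentumMap_smul_id_sq (α γ μ : ℝ) :
    momentumMap α γ (μ • LinearMap.id : E →ₗ[ℝ] E) ^ 2
      = (1 + α - (1 - α) * (γ * μ)) • momentumMap α γ (μ • LinearMap.id) - α • 1 := by
  ext z <;> simp only [sq, Module.End.mul_apply, Module.End.one_apply, LinearMap.sub_apply,
    LinearMap.smul_apply, LinearMap.id_apply, WithLp.sub_fst, WithLp.sub_snd, WithLp.smul_fst,
    WithLp.smul_snd, momentumMap_apply_fst, momentumMap_apply_snd] <;> module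

end Momentum

theorem norm_momentumMap_apply_le {E : Type*} [SeminormedAddCommGroup E] [NormedSpace ℝ E]
    {α γ h : ℝ} {H : E →ₗ[ℝ] E} (hH : ∀ x, ‖H x‖ ≤ h * ‖x‖) (hh : 0 ≤ h) (z : WithLp 2 (E × E)) :
    ‖momentumMap α γ H z‖ ≤ ((1 + |γ|) * (|α| + |1 - α| * h) + 1) * ‖z‖ := by
  have hfst := WithLp.norm_fst_le (x := z)
  have hsnd := WithLp.norm_snd_le (x := z)
  have hm : ‖α • z.fst + (1 - α) • H z.snd‖ ≤ (|α| + |1 - α| * h) * ‖z‖ := by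
    calc ‖α • z.fst + (1 - α) • H z.snd‖ ≤ |α| * ‖z.fst‖ + |1 - α| * (h * ‖z.snd‖) := by
          refine (norm_add_le _ _).trans ?_
          rw [norm_smul, norm_smul, Real.norm_eq_abs, Real.norm_eq_abs]
          gcongr
          exact hH _
      _ ≤ |α| * ‖z‖ + |1 - α| * (h * ‖z‖) := by gcongr
      _ = (|α| + |1 - α| * h) * ‖z‖ := by ring
  calc ‖momentumMap α γ H z‖ ≤ ‖α • z.fst + (1 - α) • H z.snd‖
        + (‖z.snd‖ + |γ| * ‖α • z.fst + (1 - α) • H z.snd‖) := by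
        refine (WithLp.norm_le_norm_fst_add_norm_snd _).trans ?_
        rw [momentumMap_apply_fst, momentumMap_apply_snd]
        gcongr
        exact (norm_sub_le _ _).trans_eq (by rw [norm_smul, Real.norm_eq_abs])
    _ ≤ (|α| + |1 - α| * h) * ‖z‖ + (‖z‖ + |γ| * ((|α| + |1 - α| * h) * ‖z‖)) := by gcongr
    _ = ((1 + |γ|) * (|α| + |1 - α| * h) + 1) * ‖z‖ := by ring

-- `1 + α - (1 - α) * (γ * μ)` is the trace of the block of `momentumMap` at an eigenvalue `μ`,
-- whose determinant is `α`: the block has (complex or double) eigenvalues of modulus `√α`.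
theorem momentum_trace_sq_le {α b c : ℝ} (hc : 0 ≤ c) (hcb : c ≤ b) (hbc : b * c ≤ 1)
    (hα : α = ((1 - c) / (1 + c)) ^ 2) : (1 + α - (1 - α) * b) ^ 2 ≤ 4 * α := by
  have key : (1 + α - (1 - α) * b) ^ 2 - 4 * α
      = 16 * (c * (c - b) * (1 - b * c)) / (1 + c) ^ 4 := by
    subst hα
    field_simp
    ring
  have hneg : c * (c - b) * (1 - b * c) ≤ 0 :=
    mul_nonpos_of_nonpos_of_nonneg (mul_nonpos_of_nonneg_of_nonpos hc (by linarith)) (by linarith)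
  have : 16 * (c * (c - b) * (1 - b * c)) / (1 + c) ^ 4 ≤ 0 :=
    div_nonpos_of_nonpos_of_nonneg (by linarith) (by positivity)
  linarith

section Spectral

variable {E : Type*} [NormedAddCommGroup E] [InnerProductSpace ℝ E] {ι : Type*} [Fintype ι]

def eigenCoord (e : OrthonormalBasis ι ℝ E) (i : ι) (z : WithLp 2 (E × E)) : WithLp 2 (ℝ × ℝ) :=
  WithLp.toLp 2 (⟪e i, z.fst⟫, ⟪e i, z.snd⟫)

theorem sum_norm_eigenCoord_sq (e : OrthonormalBasis ι ℝ E) (z : WithLp 2 (E × E)) :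
    ∑ i, ‖eigenCoord e i z‖ ^ 2 = ‖z‖ ^ 2 := by
  simp only [WithLp.prod_norm_sq_eq_of_L2, eigenCoord, WithLp.toLp_fst, WithLp.toLp_snd,
    Real.norm_eq_abs, sq_abs, Finset.sum_add_distrib, e.sum_sq_inner_right]

theorem eigenCoord_momentumMap {e : OrthonormalBasis ι ℝ E} {H : E →ₗ[ℝ] E} (hH : H.IsSymmetric)
    {μ : ι → ℝ} (he : ∀ i, H (e i) = μ i • e i) (α γ : ℝ) (i : ι) (z : WithLp 2 (E × E)) :
    eigenCoord e i (momentumMap α γ H z)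
      = momentumMap α γ (μ i • LinearMap.id) (eigenCoord e i z) := by
  have hHe : ⟪e i, H z.snd⟫ = μ i * ⟪e i, z.snd⟫ := by
    rw [← hH, he, real_inner_smul_left]
  ext <;> simp only [eigenCoord, momentumMap_apply_fst, momentumMap_apply_snd, WithLp.toLp_fst,
    WithLp.toLp_snd, inner_add_right, inner_sub_right, real_inner_smul_right, hHe,
    LinearMap.smul_apply, LinearMap.id_coe, id_eq, smul_eq_mul]

theorem eigenCoord_momentumMap_pow {e : OrthonormalBasis ι ℝ E} {H : E →ₗ[ℝ] E}
    (hH : H.IsSymmetric) {μ : ι → ℝ} (he : ∀ i, H (e i) = μ i • e i) (α γ : ℝ) (i : ι)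
    (n : ℕ) (z : WithLp 2 (E × E)) :
    eigenCoord e i ((momentumMap α γ H ^ n) z)
      = (momentumMap α γ (μ i • LinearMap.id) ^ n) (eigenCoord e i z) := by
  induction n with
  | zero => rfl
  | succ n ih => rw [pow_succ', pow_succ', Module.End.mul_apply, Module.End.mul_apply,
      eigenCoord_momentumMap hH he, ih]

theorem norm_momentumMap_pow_apply_le {e : OrthonormalBasis ι ℝ E} {H : E →ₗ[ℝ] E}
    (hH : H.IsSymmetric) {μ : ι → ℝ} (he : ∀ i, H (e i) = μ i • e i) {α γ c : ℝ} {n : ℕ}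
    (hc : 0 ≤ c)
    (hμ : ∀ i (w : WithLp 2 (ℝ × ℝ)), ‖(momentumMap α γ (μ i • LinearMap.id) ^ n) w‖ ≤ c * ‖w‖)
    (z : WithLp 2 (E × E)) : ‖(momentumMap α γ H ^ n) z‖ ≤ c * ‖z‖ := by
  refine (pow_le_pow_iff_left₀ (norm_nonneg _) (by positivity) two_ne_zero).1 ?_
  calc ‖(momentumMap α γ H ^ n) z‖ ^ 2
      = ∑ i, ‖(momentumMap α γ (μ i • LinearMap.id) ^ n) (eigenCoord e i z)‖ ^ 2 := by
        simp only [← sum_norm_eigenCoord_sq e, eigenCoord_momentumMap_pow hH he]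
    _ ≤ ∑ i, (c * ‖eigenCoord e i z‖) ^ 2 := by
        gcongr with i
        exact hμ i _
    _ = (c * ‖z‖) ^ 2 := by
        simp only [mul_pow, ← Finset.mul_sum, sum_norm_eigenCoord_sq]

theorem exists_sqrt_mul_norm_momentumMap_smul_id_pow_le {α γ κ K : ℝ} (hκ : 0 ≤ κ) (hκK : κ ≤ K)
    (hγ : 0 < γ) (hγκK : γ ^ 2 * (κ * K) ≤ 1) (hα : α = ((1 - γ * κ) / (1 + γ * κ)) ^ 2) :
    ∃ L, 0 ≤ L ∧ ∀ μ, κ ≤ μ → μ ≤ K → ∀ (n : ℕ) (w : WithLp 2 (ℝ × ℝ)),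
      √α * ‖(momentumMap α γ (μ • LinearMap.id) ^ n) w‖ ≤ L * (n + 1) * √α ^ n * ‖w‖ := by
  have hα1 : α ≤ 1 := by
    rw [hα, div_pow, div_le_one (by positivity)]
    nlinarith [mul_nonneg hγ.le hκ]
  refine ⟨(1 + |γ|) * (|α| + |1 - α| * K) + 1 + 1, ?_, fun μ hκμ hμK n w => ?_⟩
  · have : 0 ≤ K := hκ.trans hκK
    positivity
  have hμ : 0 ≤ μ := hκ.trans hκμ
  have htrace : (1 + α - (1 - α) * (γ * μ)) ^ 2 ≤ 4 * α :=
    momentum_trace_sq_le (mul_nonneg hγ.le hκ) (by gcongr)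
      (by nlinarith [mul_le_mul_of_nonneg_left hμK (by positivity : 0 ≤ γ ^ 2 * κ)]) hα
  have hnorm (x : ℝ) : ‖(μ • LinearMap.id : ℝ →ₗ[ℝ] ℝ) x‖ ≤ K * ‖x‖ := by
    rw [LinearMap.smul_apply, LinearMap.id_apply, norm_smul, Real.norm_of_nonneg hμ]
    gcongr
  have hsq := momentumMap_smul_id_sq (E := ℝ) α γ μ
  have hL := norm_momentumMap_apply_le (α := α) (γ := γ) hnorm (hμ.trans hμK)
  exact sqrt_mul_norm_pow_apply_le hsq htrace hα1 hL n w

theorem exists_norm_momentumMap_pow_le [FiniteDimensional ℝ E] {H : E →ₗ[ℝ] E}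
    (hH : H.IsSymmetric) {κ K γ α ρ : ℝ} (hκ : 0 ≤ κ) (hκK : κ < K) (hγ : 0 < γ)
    (hγκK : γ ^ 2 * (κ * K) ≤ 1) (hα : α = ((1 - γ * κ) / (1 + γ * κ)) ^ 2)
    (hHκ : ∀ v, κ * ‖v‖ ^ 2 ≤ ⟪v, H v⟫) (hHK : ∀ v, ⟪v, H v⟫ ≤ K * ‖v‖ ^ 2) (hρ : √α < ρ) :
    ∃ C, 0 < C ∧ ∀ n z, ‖(momentumMap α γ H ^ n) z‖ ≤ C * ρ ^ n * ‖z‖ := by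
  set e := hH.eigenvectorBasis rfl
  set μ := hH.eigenvalues rfl
  have he (i) : H (e i) = μ i • e i := hH.apply_eigenvectorBasis rfl i
  have hμ (i) : ⟪e i, H (e i)⟫ = μ i := by
    rw [he, real_inner_smul_right, real_inner_self_eq_norm_sq, e.orthonormal.1 i]
    ring
  have hα0 : 0 < α := by
    have : γ * κ < 1 := by
      by_contra! h
      have : 0 < γ ^ 2 * κ := by
        have : 0 < κ := by nlinarith
        positivity
      nlinarith [mul_lt_mul_of_pos_left hκK this, mul_self_le_mul_self zero_le_one h]
    rw [hα]
    exact pow_pos (div_pos (by linarith) (by positivity)) 2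
  obtain ⟨L, hL0, hL⟩ := exists_sqrt_mul_norm_momentumMap_smul_id_pow_le hκ hκK.le hγ hγκK hα
  obtain ⟨C, hC⟩ := exists_add_one_mul_pow_le (Real.sqrt_nonneg α) hρ
  have hr : 0 < √α := Real.sqrt_pos.2 hα0
  have hC0 : 1 ≤ C := by simpa using hC 0
  have hρ0 : 0 < ρ := hr.trans hρ
  refine ⟨(L + 1) * C / √α, by positivity, fun n z => ?_⟩
  refine norm_momentumMap_pow_apply_le hH he (by positivity) (fun i w => ?_) z
  have hw := hL (μ i) (by simpa [hμ] using hHκ (e i)) (by simpa [hμ] using hHK (e i)) n w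
  rw [div_mul_eq_mul_div, div_mul_eq_mul_div, le_div_iff₀ hr]
  calc ‖(momentumMap α γ (μ i • LinearMap.id) ^ n) w‖ * √α ≤ L * ((n + 1) * √α ^ n) * ‖w‖ := by
        linarith
    _ ≤ (L + 1) * (C * ρ ^ n) * ‖w‖ := by gcongr ?_ * ?_ * _; exacts [by linarith, hC n]
    _ = (L + 1) * C * ρ ^ n * ‖w‖ := by ring

end Spectral

theorem isBigO_pow_of_eventually_le_mul {u : ℕ → ℝ} {q : ℝ} (hq : 0 < q) (hu : ∀ n, 0 ≤ u n)
    (h : ∀ᶠ n in atTop, u (n + 1) ≤ q * u n) : u =O[atTop] (q ^ ·) := by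
  obtain ⟨N, hN⟩ := eventually_atTop.1 h
  refine IsBigO.of_bound (u N / q ^ N) ?_
  filter_upwards [eventually_ge_atTop N] with n hn
  obtain ⟨k, rfl⟩ := Nat.exists_eq_add_of_le hn
  have hk : u (N + k) ≤ q ^ k * u N :=
    le_geom (u := fun j => u (N + j)) hq.le k fun j _ => hN (N + j) (by omega)
  rw [Real.norm_of_nonneg (hu _), Real.norm_of_nonneg (by positivity), pow_add]
  calc u (N + k) ≤ q ^ k * u N := hk
    _ = u N / q ^ N * (q ^ N * q ^ k) := by field_simp

section AdaptedNorm

variable {F : Type*} [SeminormedAddCommGroup F] [Module ℝ F]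

def adaptedNorm (T : Module.End ℝ F) (ρ : ℝ) (x : F) : ℝ := ⨆ n : ℕ, ‖(T ^ n) x‖ / ρ ^ n

variable {T : Module.End ℝ F} {C ρ : ℝ}

theorem bddAbove_adaptedNorm (hρ : 0 < ρ) (hT : ∀ n x, ‖(T ^ n) x‖ ≤ C * ρ ^ n * ‖x‖) (x : F) :
    BddAbove (Set.range fun n : ℕ => ‖(T ^ n) x‖ / ρ ^ n) := by
  refine ⟨C * ‖x‖, ?_⟩
  rintro _ ⟨n, rfl⟩
  rw [div_le_iff₀ (by positivity)]
  linarith [hT n x]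

theorem adaptedNorm_le (hρ : 0 < ρ) (hT : ∀ n x, ‖(T ^ n) x‖ ≤ C * ρ ^ n * ‖x‖) (x : F) :
    adaptedNorm T ρ x ≤ C * ‖x‖ :=
  ciSup_le fun n => (div_le_iff₀ (by positivity)).2 (by linarith [hT n x])

theorem norm_le_adaptedNorm (hρ : 0 < ρ) (hT : ∀ n x, ‖(T ^ n) x‖ ≤ C * ρ ^ n * ‖x‖) (x : F) :
    ‖x‖ ≤ adaptedNorm T ρ x :=
  le_ciSup_of_le (bddAbove_adaptedNorm hρ hT x) 0 (by simp)

theorem adaptedNorm_add_le (hρ : 0 < ρ) (hT : ∀ n x, ‖(T ^ n) x‖ ≤ C * ρ ^ n * ‖x‖) (x y : F) :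
    adaptedNorm T ρ (x + y) ≤ adaptedNorm T ρ x + adaptedNorm T ρ y := by
  refine ciSup_le fun n => ?_
  calc ‖(T ^ n) (x + y)‖ / ρ ^ n ≤ ‖(T ^ n) x‖ / ρ ^ n + ‖(T ^ n) y‖ / ρ ^ n := by
        rw [map_add, ← add_div]
        gcongr
        exact norm_add_le _ _
    _ ≤ adaptedNorm T ρ x + adaptedNorm T ρ y :=
        add_le_add (le_ciSup (bddAbove_adaptedNorm hρ hT x) n)
          (le_ciSup (bddAbove_adaptedNorm hρ hT y) n)

theorem adaptedNorm_apply_le (hρ : 0 < ρ) (hT : ∀ n x, ‖(T ^ n) x‖ ≤ C * ρ ^ n * ‖x‖) (x : F) :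
    adaptedNorm T ρ (T x) ≤ ρ * adaptedNorm T ρ x := by
  refine ciSup_le fun n => ?_
  calc ‖(T ^ n) (T x)‖ / ρ ^ n = ρ * (‖(T ^ (n + 1)) x‖ / ρ ^ (n + 1)) := by
        rw [pow_succ T, Module.End.mul_apply]
        field_simp
        ring
    _ ≤ ρ * adaptedNorm T ρ x := by
        gcongr
        exact le_ciSup (bddAbove_adaptedNorm hρ hT x) (n + 1)

-- In the norm `adaptedNorm T ρ`, `T` contracts by `ρ`, so a relative error of size `ε` along
-- the orbit only raises the rate to `ρ + C ε`.
theorem isBigO_pow_of_isLittleO_sub_apply (hC : 0 < C) (hρ : 0 < ρ)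
    (hT : ∀ n x, ‖(T ^ n) x‖ ≤ C * ρ ^ n * ‖x‖) {z : ℕ → F}
    (hz : (fun n => z (n + 1) - T (z n)) =o[atTop] z) {σ : ℝ} (hσ : ρ < σ) :
    z =O[atTop] (σ ^ ·) := by
  have hN (n : ℕ) := norm_le_adaptedNorm hρ hT (z n)
  have hstep : ∀ᶠ n in atTop, adaptedNorm T ρ (z (n + 1)) ≤ σ * adaptedNorm T ρ (z n) := by
    filter_upwards [hz.def (div_pos (sub_pos.2 hσ) hC)] with n hn
    calc adaptedNorm T ρ (z (n + 1))
        ≤ adaptedNorm T ρ (T (z n)) + adaptedNorm T ρ (z (n + 1) - T (z n)) := by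
          simpa using adaptedNorm_add_le hρ hT (T (z n)) (z (n + 1) - T (z n))
      _ ≤ ρ * adaptedNorm T ρ (z n) + C * ((σ - ρ) / C * ‖z n‖) := by
          gcongr
          · exact adaptedNorm_apply_le hρ hT _
          · exact (adaptedNorm_le hρ hT _).trans (by gcongr)
      _ ≤ σ * adaptedNorm T ρ (z n) := by
          rw [← mul_assoc, mul_div_cancel₀ _ hC.ne']
          nlinarith [hN n]
  have hN0 (n : ℕ) : 0 ≤ adaptedNorm T ρ (z n) := (norm_nonneg _).trans (hN n)
  refine IsBigO.trans (.of_bound 1 (.of_forall fun n => ?_))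
    (isBigO_pow_of_eventually_le_mul (hρ.trans hσ) hN0 hstep)
  rw [one_mul, Real.norm_of_nonneg (hN0 n)]
  exact hN n

end AdaptedNorm

theorem exists_pos_forall_norm_le_of_isBigO_pow {F : Type*} [NormedAddCommGroup F] {u : ℕ → F}
    {σ : ℝ} (hσ : 0 < σ) (hu : u =O[atTop] (σ ^ ·)) : ∃ C, 0 < C ∧ ∀ n, ‖u n‖ ≤ C * σ ^ n := by
  rw [← Nat.cofinite_eq_atTop,
    isBigO_cofinite_iff fun n h => absurd h (pow_ne_zero n hσ.ne')] at hu
  obtain ⟨C, hC⟩ := hu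
  refine ⟨max C 1, by positivity, fun n => (hC n).trans ?_⟩
  rw [Real.norm_of_nonneg (by positivity)]
  gcongr
  exact le_max_left _ _

theorem norm_had_le {d : ℕ} (x y : EuclideanSpace ℝ (Fin d)) : ‖had x y‖ ≤ ‖x‖ * ‖y‖ := by
  refine (pow_le_pow_iff_left₀ (norm_nonneg _) (by positivity) two_ne_zero).1 ?_
  calc ‖had x y‖ ^ 2 = ∑ i, x i ^ 2 * y i ^ 2 := by
        simp [EuclideanSpace.norm_sq_eq, had, mul_pow]
    _ ≤ ∑ i, ‖x‖ ^ 2 * y i ^ 2 := by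
        refine Finset.sum_le_sum fun i _ => mul_le_mul_of_nonneg_right ?_ (sq_nonneg _)
        simpa using pow_le_pow_left₀ (norm_nonneg _) (PiLp.norm_apply_le x i) 2
    _ = (‖x‖ * ‖y‖) ^ 2 := by
        simp [mul_pow, ← Finset.mul_sum, EuclideanSpace.norm_sq_eq]

theorem isLittleO_had {ι : Type*} {l : Filter ι} {F : Type*} [NormedAddCommGroup F] {d : ℕ}
    {a b : ι → EuclideanSpace ℝ (Fin d)} {f : ι → F} (ha : Tendsto a l (𝓝 0)) (hb : b =O[l] f) :
    (fun n => had (a n) (b n)) =o[l] f := by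
  have h1 : (fun n => ‖a n‖) =o[l] (fun _ => (1 : ℝ)) :=
    (isLittleO_one_iff ℝ).2 (tendsto_zero_iff_norm_tendsto_zero.1 ha)
  have h2 : (fun n => ‖a n‖ * ‖b n‖) =o[l] f := by
    simpa using (h1.mul_isBigO hb.norm_norm).norm_right
  refine (IsBigO.of_bound 1 (.of_forall fun n => ?_)).trans_isLittleO h2
  simpa [abs_of_nonneg, mul_nonneg] using norm_had_le (a n) (b n)

theorem isLittleO_momentum_error {d : ℕ} {g : EuclideanSpace ℝ (Fin d) → EuclideanSpace ℝ (Fin d)}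
    {H : EuclideanSpace ℝ (Fin d) →L[ℝ] EuclideanSpace ℝ (Fin d)} (hg : HasFDerivAt g H 0)
    (hg0 : g 0 = 0) {α γ : ℝ} {Γ m Θ : ℕ → EuclideanSpace ℝ (Fin d)}
    (hm : ∀ n, m (n + 1) = α • m n + (1 - α) • g (Θ n))
    (hΘ : ∀ n, Θ (n + 1) = Θ n - had (Γ (n + 1)) (m (n + 1)))
    (hΓ : Tendsto Γ atTop (𝓝 (γ • ones d))) (hΘ0 : Tendsto Θ atTop (𝓝 0)) :
    (fun n => WithLp.toLp 2 (m (n + 1), Θ (n + 1)) - momentumMap α γ H (WithLp.toLp 2 (m n, Θ n)))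
      =o[atTop] fun n => WithLp.toLp 2 (m n, Θ n) := by
  set z := fun n => WithLp.toLp 2 (m n, Θ n)
  have hmz : m =O[atTop] z := IsBigO.of_bound 1 (.of_forall fun n => by
    rw [one_mul]; exact WithLp.norm_fst_le (x := z n))
  have hΘz : Θ =O[atTop] z := IsBigO.of_bound 1 (.of_forall fun n => by
    rw [one_mul]; exact WithLp.norm_snd_le (x := z n))
  have hr : (fun n => g (Θ n) - H (Θ n)) =o[atTop] z := by
    have := hg.isLittleO.comp_tendsto hΘ0
    simp only [hg0, sub_zero, Function.comp_def] at this
    exact this.trans_isBigO hΘz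
  have hgz : (fun n => g (Θ n)) =O[atTop] z := by
    simpa using hr.isBigO.add ((H.isBigO_comp Θ atTop).trans hΘz)
  have hm1 : (fun n => m (n + 1)) =O[atTop] z := by
    simp only [hm]
    exact (hmz.const_smul_left α).add (hgz.const_smul_left (1 - α))
  have hΓ1 : Tendsto (fun n => γ • ones d - Γ (n + 1)) atTop (𝓝 0) := by
    simpa using (tendsto_const_nhds (x := γ • ones d)).sub (hΓ.comp (tendsto_add_atTop_nat 1))
  refine (IsLittleO.toLp_prod (hr.const_smul_left (1 - α))
    ((isLittleO_had hΓ1 hm1).sub (hr.const_smul_left (γ * (1 - α))))).congr_left fun n => ?_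
  ext i <;> simp only [hm, hΘ, had, ones, WithLp.sub_fst, WithLp.sub_snd, WithLp.toLp_fst,
    WithLp.toLp_snd, momentumMap_apply_fst, momentumMap_apply_snd, ContinuousLinearMap.coe_coe,
    PiLp.add_apply, PiLp.sub_apply, PiLp.smul_apply, Pi.smul_apply, smul_eq_mul] <;> ring

theorem stmt10_general (d : ℕ) (κ K : ℝ) (hκ : 0 < κ) (hκK : κ < K)
    (g : EuclideanSpace ℝ (Fin d) → EuclideanSpace ℝ (Fin d))
    (hgd : DifferentiableAt ℝ g 0) (hg0 : g 0 = 0)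
    -- (∇g)(0) is symmetric
    (hsymm : ∀ v w : EuclideanSpace ℝ (Fin d),
      ⟪fderiv ℝ g 0 v, w⟫ = ⟪v, fderiv ℝ g 0 w⟫)
    -- κ I_d ⪯ (∇g)(0) ⪯ K I_d
    (hbound : ∀ v : EuclideanSpace ℝ (Fin d),
      κ * ‖v‖ ^ 2 ≤ ⟪v, fderiv ℝ g 0 v⟫ ∧ ⟪v, fderiv ℝ g 0 v⟫ ≤ K * ‖v‖ ^ 2)
    (γ α : ℝ) (hγ0 : 0 < γ) (hγ : γ ≤ 1 / Real.sqrt (κ * K))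
    (hα : α = ((1 - γ * κ) / (1 + γ * κ)) ^ 2)
    (Γ : ℕ → EuclideanSpace ℝ (Fin d))
    (m Θ : ℕ → EuclideanSpace ℝ (Fin d))
    (hm : ∀ n : ℕ, m (n + 1) = α • m n + (1 - α) • g (Θ n))
    (hΘ : ∀ n : ℕ, Θ (n + 1) = Θ n - had (Γ (n + 1)) (m (n + 1)))
    (hΓlim : Tendsto Γ atTop (nhds (γ • ones d)))
    (hΘlim : Tendsto Θ atTop (nhds 0))
    (δ : ℝ) (hδ : 0 < δ) :
    ∃ C : ℝ, 0 < C ∧ ∀ n : ℕ, ‖Θ n‖ ≤ C * (Real.sqrt α + δ) ^ n := by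
  have hγκK : γ ^ 2 * (κ * K) ≤ 1 := by
    have hs : 0 < √(κ * K) := Real.sqrt_pos.2 (by nlinarith)
    have h : γ * √(κ * K) ≤ 1 := by rwa [le_div_iff₀ hs] at hγ
    calc γ ^ 2 * (κ * K) = (γ * √(κ * K)) ^ 2 := by rw [mul_pow, Real.sq_sqrt (by nlinarith)]
      _ ≤ 1 := pow_le_one₀ (by positivity) h
  obtain ⟨C, hC, hT⟩ := exists_norm_momentumMap_pow_le
    (H := (fderiv ℝ g 0 : EuclideanSpace ℝ (Fin d) →ₗ[ℝ] EuclideanSpace ℝ (Fin d))) hsymm hκ.le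
    hκK hγ0 hγκK hα (fun v => (hbound v).1) (fun v => (hbound v).2)
    (ρ := √α + δ / 2) (by linarith)
  have hz := isBigO_pow_of_isLittleO_sub_apply hC (by positivity) hT
    (z := fun n => WithLp.toLp 2 (m n, Θ n))
    (isLittleO_momentum_error hgd.hasFDerivAt hg0 hm hΘ hΓlim hΘlim) (σ := √α + δ) (by linarith)
  refine exists_pos_forall_norm_le_of_isBigO_pow (by positivity) ((IsBigO.of_bound 1 ?_).trans hz)
  exact .of_forall fun n => by simpa using WithLp.norm_snd_le (x := WithLp.toLp 2 (m n, Θ n))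

/-- Momentum GD with adaptive learning rates for locally regular vector fields. -/
theorem stmt10 (d : ℕ) (hd : 0 < d) (κ K : ℝ) (hκ : 0 < κ) (hκK : κ < K)
    (g : EuclideanSpace ℝ (Fin d) → EuclideanSpace ℝ (Fin d))
    (hgc : Continuous g) (hgd : DifferentiableAt ℝ g 0) (hg0 : g 0 = 0)
    -- (∇g)(0) is symmetric
    (hsymm : ∀ v w : EuclideanSpace ℝ (Fin d),
      ⟪fderiv ℝ g 0 v, w⟫ = ⟪v, fderiv ℝ g 0 w⟫)
    -- κ I_d ⪯ (∇g)(0) ⪯ K I_d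
    (hbound : ∀ v : EuclideanSpace ℝ (Fin d),
      κ * ‖v‖ ^ 2 ≤ ⟪v, fderiv ℝ g 0 v⟫ ∧ ⟪v, fderiv ℝ g 0 v⟫ ≤ K * ‖v‖ ^ 2)
    (γ α : ℝ) (hγ0 : 0 < γ) (hγ : γ ≤ 1 / Real.sqrt (κ * K))
    (hα : α = ((1 - γ * κ) / (1 + γ * κ)) ^ 2)
    (Γ : ℕ → EuclideanSpace ℝ (Fin d)) (hΓpos : ∀ n : ℕ, ∀ i, 0 < Γ (n + 1) i)
    (m Θ : ℕ → EuclideanSpace ℝ (Fin d))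
    (hm : ∀ n : ℕ, m (n + 1) = α • m n + (1 - α) • g (Θ n))
    (hΘ : ∀ n : ℕ, Θ (n + 1) = Θ n - had (Γ (n + 1)) (m (n + 1)))
    (hΓlim : Tendsto Γ atTop (nhds (γ • ones d)))
    (hΘlim : Tendsto Θ atTop (nhds 0))
    (δ : ℝ) (hδ : 0 < δ) :
    ∃ C : ℝ, 0 < C ∧ ∀ n : ℕ, ‖Θ n‖ ≤ C * (Real.sqrt α + δ) ^ n :=
  stmt10_general d κ K hκ hκK g hgd hg0 hsymm hbound γ α hγ0 hγ hα Γ m Θ hm hΘ hΓlim hΘlim δ hδ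
end
end

section
/- Let d ∈ ℕ, K ∈ (0,∞), let L : ℝ^d → ℝ be continuously differentiable and satisfy lim_{‖θ‖→∞} L(θ) = ∞ and ‖(∇L)(θ) − (∇L)(ψ)‖ ≤ K‖θ − ψ‖ for all θ, ψ ∈ ℝ^d, let ε, γ ∈ (0,∞) and α, β ∈ (0,1) satisfy α² < β and γ < αε/K, and let Θ, m, 𝕄 : ℕ_0 → ℝ^d satisfy for all n ∈ ℕ: m_n = α m_{n−1} + (1−α)(∇L)(Θ_{n−1}), 𝕄_n = β 𝕄_{n−1} + (1−β)[(∇L)(Θ_{n−1})]^{⊙2}, and Θ_n = Θ_{n−1} − γ(1−α^n)^{−1} (ε𝟙_d + (1−β^n)^{−1/2}(𝕄_n)^{⊙1/2})^{⊙(−1)} ⊙ m_n. Then lim_{n→∞} (∇L)(Θ_n) = 0 and lim_{n→∞} 𝕄_n = 0. -/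
/-!
Put `h n i = γ (1 - α) / (1 - α ^ (n + 1)) · (ε + √(𝕄 (n + 1) i / (1 - β ^ (n + 1))))⁻¹`. The
Adam update is then `Θ (n + 1) - Θ n = -(h n / (1 - α)) ⊙ m (n + 1)`, and eliminating `m` gives
the heavy-ball iteration
  `Θ (n + 2) - Θ (n + 1) = α (h (n + 1) / h n) ⊙ (Θ (n + 1) - Θ n) - h (n + 1) ⊙ ∇L(Θ (n + 1))`.
Along it the energy `L(Θ (n + 1)) + ∑ᵢ (1 - K h n i) / (2 h n i) · (Θ (n + 1) i - Θ n i)²`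
drops by at least `∑ᵢ h (n + 1) i · (∇L(Θ (n + 1)) i)² / 2` whenever
`α² h (n + 1) i / h n i + K h n i ≤ 1`. Since `h (n + 1) i / h n i` is at most
`√((1 - β ^ (n + 2)) / (β (1 - β ^ (n + 1)))) → β^{-1/2}` and `K h n i` at most
`K γ (1 - α) / ((1 - α ^ (n + 1)) ε) → K γ (1 - α) / ε`, the assumptions `α² < β` and
`γ < α ε / K` make this hold eventually. Coercivity then bounds the trajectory, hence the
gradients, the second moments `𝕄`, and so the step sizes `h` from below; the energy drops are
summable, so `∇L(Θ n) → 0`, and `𝕄`, an exponential moving average of the squared gradients,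
follows.
-/

open Filter

noncomputable section

/-- Componentwise square. -/
def sq2 {d : ℕ} (x : EuclideanSpace ℝ (Fin d)) : EuclideanSpace ℝ (Fin d) :=
  WithLp.toLp 2 (fun i => (x i) ^ 2)

/-- The vector `(ε𝟙_d + b • x^{⊙1/2})^{⊙(-1)}`, i.e. componentwise `(ε + b·√(x i))⁻¹`. -/
def regInvSqrt {d : ℕ} (ε b : ℝ) (x : EuclideanSpace ℝ (Fin d)) :
    EuclideanSpace ℝ (Fin d) :=
  WithLp.toLp 2 (fun i => (ε + b * Real.sqrt (x i))⁻¹)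

open Topology

@[simp]
theorem had_apply {d : ℕ} (x y : EuclideanSpace ℝ (Fin d)) (i : Fin d) :
    had x y i = x i * y i := rfl

@[simp]
theorem sq2_apply {d : ℕ} (x : EuclideanSpace ℝ (Fin d)) (i : Fin d) : sq2 x i = x i ^ 2 := rfl

@[simp]
theorem regInvSqrt_apply {d : ℕ} (ε b : ℝ) (x : EuclideanSpace ℝ (Fin d)) (i : Fin d) :
    regInvSqrt ε b x i = (ε + b * √(x i))⁻¹ := rfl

theorem le_add_inner_add_sq_of_lipschitz_gradient {E : Type*} [NormedAddCommGroup E]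
    [InnerProductSpace ℝ E] [CompleteSpace E] {f : E → ℝ} {K : ℝ} (hf : Differentiable ℝ f)
    (hLip : ∀ x y, ‖gradient f x - gradient f y‖ ≤ K * ‖x - y‖) (x y : E) :
    f y ≤ f x + inner ℝ (gradient f x) (y - x) + K / 2 * ‖y - x‖ ^ 2 := by
  set v := y - x
  set ψ : ℝ → ℝ := fun t =>
    f (x + t • v) - t * inner ℝ (gradient f x) v - K / 2 * t ^ 2 * ‖v‖ ^ 2
  have hψ : ∀ t, HasDerivAt ψ
      (inner ℝ (gradient f (x + t • v) - gradient f x) v - K * t * ‖v‖ ^ 2) t := by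
    intro t
    have hline : HasDerivAt (fun t : ℝ => x + t • v) v t := by
      simpa using ((hasDerivAt_id t).smul_const v).const_add x
    have hfline := (hf (x + t • v)).hasGradientAt.hasFDerivAt.comp_hasDerivAt t hline
    refine ((hfline.sub ((hasDerivAt_id t).mul_const (inner ℝ (gradient f x) v))).sub
      (((hasDerivAt_pow 2 t).const_mul (K / 2)).mul_const (‖v‖ ^ 2))).congr_deriv ?_
    rw [InnerProductSpace.toDual_apply_apply, inner_sub_left]
    ring
  have hanti : AntitoneOn ψ (Set.Ici 0) := by
    refine antitoneOn_of_deriv_nonpos (convex_Ici 0)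
      (fun t _ => (hψ t).continuousAt.continuousWithinAt)
      (fun t _ => (hψ t).differentiableAt.differentiableWithinAt) fun t ht => ?_
    rw [interior_Ici, Set.mem_Ioi] at ht
    rw [(hψ t).deriv, sub_nonpos]
    calc inner ℝ (gradient f (x + t • v) - gradient f x) v
        ≤ ‖gradient f (x + t • v) - gradient f x‖ * ‖v‖ := real_inner_le_norm _ _
      _ ≤ K * ‖t • v‖ * ‖v‖ := by gcongr; simpa using hLip (x + t • v) x
      _ = K * t * ‖v‖ ^ 2 := by rw [norm_smul, Real.norm_of_nonneg ht.le]; ring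
  have hψ10 := hanti (Set.mem_Ici.2 le_rfl) (Set.mem_Ici.2 zero_le_one) zero_le_one
  have hxv : x + (1 : ℝ) • v = y := by simp [v]
  simp only [ψ, hxv, zero_smul, add_zero] at hψ10
  linarith

theorem isBounded_setOf_le_of_tendsto {E : Type*} [SeminormedAddCommGroup E] {f : E → ℝ}
    (hf : Tendsto f (comap (fun x => ‖x‖) atTop) atTop) (c : ℝ) :
    Bornology.IsBounded {x | f x ≤ c} := by
  rw [comap_norm_atTop] at hf
  refine Bornology.isBounded_def.2 ?_
  filter_upwards [hf.eventually (eventually_gt_atTop c)] with x hx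
  simpa using hx

theorem norm_le_norm_zero_add_of_lipschitz {E F : Type*} [SeminormedAddCommGroup E]
    [SeminormedAddCommGroup F] {f : E → F} {K : ℝ} (hf : ∀ x y, ‖f x - f y‖ ≤ K * ‖x - y‖)
    (x : E) : ‖f x‖ ≤ ‖f 0‖ + K * ‖x‖ := by
  have hx := hf x 0
  rw [sub_zero] at hx
  linarith [norm_le_insert' (f x) (f 0)]

theorem summable_of_succ_add_le {f a : ℕ → ℝ} {B : ℝ} {N : ℕ} (ha : ∀ n, 0 ≤ a n)
    (hf : ∀ n ≥ N, f (n + 1) + a n ≤ f n) (hB : ∀ n ≥ N, B ≤ f n) : Summable a := by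
  have htel : ∀ k, f (k + N) + ∑ j ∈ Finset.range k, a (j + N) ≤ f N := by
    intro k
    induction k with
    | zero => simp
    | succ k ih =>
      rw [Finset.sum_range_succ, add_right_comm k 1 N]
      linarith [hf (k + N) (Nat.le_add_left N k)]
  refine (summable_nat_add_iff N).1
    (summable_of_sum_range_le (c := f N - B) (fun j => ha _) fun k => ?_)
  linarith [htel k, hB (k + N) (Nat.le_add_left N k)]

theorem abs_le_pow_mul_add_of_ema {x u : ℕ → ℝ} {β c : ℝ} (hβ0 : 0 ≤ β) (hβ1 : β ≤ 1)
    (hx : ∀ n, x (n + 1) = β * x n + (1 - β) * u n) (hu : ∀ n, |u n| ≤ c) (n : ℕ) :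
    |x n| ≤ β ^ n * |x 0| + c := by
  induction n with
  | zero => simpa using (abs_nonneg _).trans (hu 0)
  | succ n ih =>
    calc |x (n + 1)| ≤ β * |x n| + (1 - β) * |u n| := by
          rw [hx n]
          refine (abs_add_le _ _).trans_eq ?_
          rw [abs_mul, abs_mul, abs_of_nonneg hβ0, abs_of_nonneg (sub_nonneg.2 hβ1)]
      _ ≤ β * (β ^ n * |x 0| + c) + (1 - β) * c := by
          gcongr
          exact hu n
      _ = β ^ (n + 1) * |x 0| + c := by ring

theorem tendsto_zero_of_ema {x u : ℕ → ℝ} {β : ℝ} (hβ0 : 0 ≤ β) (hβ1 : β < 1)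
    (hx : ∀ n, x (n + 1) = β * x n + (1 - β) * u n) (hu : Tendsto u atTop (𝓝 0)) :
    Tendsto x atTop (𝓝 0) := by
  rw [Metric.tendsto_atTop]
  intro e he
  obtain ⟨N, hN⟩ := Metric.tendsto_atTop.1 hu (e / 2) (half_pos he)
  have hpow : Tendsto (fun k => β ^ k * |x N|) atTop (𝓝 0) := by
    simpa using (tendsto_pow_atTop_nhds_zero_of_lt_one hβ0 hβ1).mul_const |x N|
  obtain ⟨k₀, hk₀⟩ := eventually_atTop.1 (hpow.eventually (eventually_lt_nhds (half_pos he)))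
  refine ⟨N + k₀, fun n hn => ?_⟩
  obtain ⟨k, rfl⟩ := Nat.exists_eq_add_of_le (le_of_add_le_left hn)
  have hshift := abs_le_pow_mul_add_of_ema hβ0 hβ1.le (x := fun j => x (N + j))
    (fun j => hx (N + j)) (fun j => by simpa using (hN (N + j) (Nat.le_add_right N j)).le) k
  rw [add_zero] at hshift
  rw [Real.dist_eq, sub_zero]
  linarith [hk₀ k (by omega)]

theorem tendsto_euclideanSpace_of_forall_apply {d : ℕ} {ι : Type*} {l : Filter ι}
    {f : ι → EuclideanSpace ℝ (Fin d)} {a : EuclideanSpace ℝ (Fin d)}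
    (h : ∀ i, Tendsto (fun n => f n i) l (𝓝 (a i))) : Tendsto f l (𝓝 a) :=
  ((PiLp.continuous_toLp 2 _).tendsto (WithLp.ofLp a)).comp (tendsto_pi_nhds.2 h)

theorem tendsto_zero_of_summable_sum_mul_sq {d : ℕ} {v : ℕ → EuclideanSpace ℝ (Fin d)}
    {w : ℕ → Fin d → ℝ} {c : ℝ} (hc : 0 < c) (hw : ∀ᶠ n in atTop, ∀ i, c ≤ w n i)
    (hs : Summable fun n => ∑ i, w n i * v n i ^ 2) : Tendsto v atTop (𝓝 0) := by
  have hsq : Tendsto (fun n => ‖v n‖ ^ 2) atTop (𝓝 0) := by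
    refine squeeze_zero' (Eventually.of_forall fun n => by positivity) (hw.mono fun n hn => ?_)
      (by simpa using hs.tendsto_atTop_zero.div_const c)
    rw [le_div_iff₀ hc, EuclideanSpace.norm_sq_eq, Finset.sum_mul]
    refine Finset.sum_le_sum fun i _ => ?_
    rw [Real.norm_eq_abs, sq_abs, mul_comm]
    exact mul_le_mul_of_nonneg_right (hn i) (sq_nonneg _)
  rw [tendsto_zero_iff_norm_tendsto_zero]
  simpa using hsq.sqrt

theorem heavyBall_scalar_le {K a h h' q q' g : ℝ} (hh : 0 < h) (hh' : 0 < h')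
    (hcond : a ^ 2 * (h' / h) + K * h ≤ 1) (hq' : q' = a * (h' / h) * q - h' * g) :
    q' * g + K / 2 * q' ^ 2 + (1 - K * h') / (2 * h') * q' ^ 2 + h' * g ^ 2 / 2
      ≤ (1 - K * h) / (2 * h) * q ^ 2 := by
  -- the left side is `(q' + h' g)² / (2 h')`
  have hleft : q' * g + K / 2 * q' ^ 2 + (1 - K * h') / (2 * h') * q' ^ 2 + h' * g ^ 2 / 2
      = a ^ 2 * (h' / h) / (2 * h) * q ^ 2 := by
    subst hq'
    field_simp
    ring
  rw [hleft]
  gcongr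
  linarith

section HeavyBall

variable {d : ℕ} {L : EuclideanSpace ℝ (Fin d) → ℝ} {K α : ℝ}
  {x : ℕ → EuclideanSpace ℝ (Fin d)} {h : ℕ → Fin d → ℝ}

def heavyBallEnergy (L : EuclideanSpace ℝ (Fin d) → ℝ) (K : ℝ)
    (x : ℕ → EuclideanSpace ℝ (Fin d)) (h : ℕ → Fin d → ℝ) (n : ℕ) : ℝ :=
  L (x (n + 1)) + ∑ i, (1 - K * h n i) / (2 * h n i) * (x (n + 1) i - x n i) ^ 2

theorem le_heavyBallEnergy (n : ℕ) (hh : ∀ i, 0 < h n i) (hKh : ∀ i, K * h n i ≤ 1) :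
    L (x (n + 1)) ≤ heavyBallEnergy L K x h n :=
  le_add_of_nonneg_right <| Finset.sum_nonneg fun i _ =>
    mul_nonneg (div_nonneg (sub_nonneg.2 (hKh i)) (by linarith [hh i])) (sq_nonneg _)

theorem heavyBallEnergy_succ_add_le (hL : Differentiable ℝ L)
    (hLip : ∀ θ ψ, ‖gradient L θ - gradient L ψ‖ ≤ K * ‖θ - ψ‖) (n : ℕ)
    (hh : ∀ i, 0 < h n i) (hh' : ∀ i, 0 < h (n + 1) i)
    (hcond : ∀ i, α ^ 2 * (h (n + 1) i / h n i) + K * h n i ≤ 1)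
    (hx : ∀ i, x (n + 2) i - x (n + 1) i =
      α * (h (n + 1) i / h n i) * (x (n + 1) i - x n i) - h (n + 1) i * gradient L (x (n + 1)) i) :
    heavyBallEnergy L K x h (n + 1) + (∑ i, h (n + 1) i * gradient L (x (n + 1)) i ^ 2) / 2
      ≤ heavyBallEnergy L K x h n := by
  have hdescent := le_add_inner_add_sq_of_lipschitz_gradient hL hLip (x (n + 1)) (x (n + 2))
  simp only [EuclideanSpace.norm_sq_eq, PiLp.inner_apply, PiLp.sub_apply, Real.norm_eq_abs,
    sq_abs, RCLike.inner_apply, conj_trivial, Finset.mul_sum] at hdescent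
  have hcoord := Finset.sum_le_sum fun i (_ : i ∈ Finset.univ) =>
    heavyBall_scalar_le (hh i) (hh' i) (hcond i) (hx i)
  simp only [Finset.sum_add_distrib] at hcoord
  rw [Finset.sum_div]
  simp only [heavyBallEnergy, show n + 1 + 1 = n + 2 from rfl]
  linarith

theorem heavyBall_eventually_bounded_and_summable (hL : Differentiable ℝ L)
    (hcoer : Tendsto L (comap (fun θ => ‖θ‖) atTop) atTop)
    (hLip : ∀ θ ψ, ‖gradient L θ - gradient L ψ‖ ≤ K * ‖θ - ψ‖) (hh : ∀ n i, 0 < h n i)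
    (hcond : ∀ᶠ n in atTop, ∀ i, α ^ 2 * (h (n + 1) i / h n i) + K * h n i ≤ 1)
    (hx : ∀ n i, x (n + 2) i - x (n + 1) i =
      α * (h (n + 1) i / h n i) * (x (n + 1) i - x n i) - h (n + 1) i * gradient L (x (n + 1)) i) :
    (∃ R, ∀ᶠ n in atTop, ‖x n‖ ≤ R) ∧
      Summable fun n => ∑ i, h n i * gradient L (x n) i ^ 2 := by
  obtain ⟨N, hN⟩ := eventually_atTop.1 hcond
  have hdec : ∀ n, 0 ≤ (∑ i, h (n + 1) i * gradient L (x (n + 1)) i ^ 2) / 2 := fun n =>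
    div_nonneg (Finset.sum_nonneg fun i _ => mul_nonneg (hh (n + 1) i).le (sq_nonneg _))
      zero_le_two
  have hstep : ∀ n ≥ N, heavyBallEnergy L K x h (n + 1)
      + (∑ i, h (n + 1) i * gradient L (x (n + 1)) i ^ 2) / 2 ≤ heavyBallEnergy L K x h n :=
    fun n hn => heavyBallEnergy_succ_add_le hL hLip n (hh n) (hh (n + 1)) (hN n hn) (hx n)
  have hLE : ∀ n ≥ N, L (x (n + 1)) ≤ heavyBallEnergy L K x h n := fun n hn =>
    le_heavyBallEnergy n (hh n) fun i => by
      nlinarith [hN n hn i, div_pos (hh (n + 1) i) (hh n i)]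
  have hanti : AntitoneOn (heavyBallEnergy L K x h) (Set.Ici N) :=
    antitoneOn_nat_Ici_of_succ_le fun n hn => by linarith [hstep n hn, hdec n]
  obtain ⟨θ₀, hθ₀⟩ := hL.continuous.exists_forall_le
    (by rwa [← Metric.cobounded_eq_cocompact, ← comap_norm_atTop])
  constructor
  · obtain ⟨R, hR⟩ := isBounded_iff_forall_norm_le.1
      (isBounded_setOf_le_of_tendsto hcoer (heavyBallEnergy L K x h N))
    refine ⟨R, eventually_atTop.2 ⟨N + 1, fun n hn => hR _ ?_⟩⟩
    obtain ⟨k, rfl⟩ : ∃ k, n = k + 1 := ⟨n - 1, by omega⟩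
    exact (hLE k (by omega)).trans
      (hanti (Set.mem_Ici.2 le_rfl) (Set.mem_Ici.2 (by omega)) (by omega))
  · rw [← summable_nat_add_iff 1, ← summable_div_const_iff two_ne_zero]
    exact summable_of_succ_add_le hdec hstep fun n hn => (hθ₀ _).trans (hLE n hn)

end HeavyBall

theorem inv_add_mul_sqrt_le {ε β a b v w : ℝ} (hε : 0 < ε) (hβ : 0 < β) (ha : 0 < a)
    (hab : β * a ≤ b) (hvw : β * v ≤ w) :
    (ε + (√b)⁻¹ * √w)⁻¹ ≤ √b / (√β * √a) * (ε + (√a)⁻¹ * √v)⁻¹ := by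
  have hb : 0 < b := (mul_pos hβ ha).trans_le hab
  have hβa : √β * √a ≤ √b := by rw [← Real.sqrt_mul hβ.le]; exact Real.sqrt_le_sqrt hab
  have hβv : √β * √v ≤ √w := by rw [← Real.sqrt_mul hβ.le]; exact Real.sqrt_le_sqrt hvw
  have hlhs : (ε + (√b)⁻¹ * √w)⁻¹ = √b / (ε * √b + √w) := by field_simp
  have hrhs : √b / (√β * √a) * (ε + (√a)⁻¹ * √v)⁻¹ = √b / (√β * (ε * √a + √v)) := by
    field_simp
  rw [hlhs, hrhs]
  gcongr
  nlinarith [mul_le_mul_of_nonneg_left hβa hε.le]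

theorem sq_div_sqrt_add_mul_lt_one {K ε γ α β : ℝ} (hK : 0 < K) (hε : 0 < ε) (hα0 : 0 < α)
    (hα1 : α < 1) (hαβ : α ^ 2 < β) (hγK : γ < α * ε / K) :
    α ^ 2 / √β + K * (γ * (1 - α) / ε) < 1 := by
  have hsβ : α < √β := (Real.lt_sqrt hα0.le).2 hαβ
  have h1 : α ^ 2 / √β < α := by rw [div_lt_iff₀ (hα0.trans hsβ)]; nlinarith
  have h2 : K * (γ * (1 - α) / ε) < α * (1 - α) := by
    rw [lt_div_iff₀ hK] at hγK
    rw [← mul_div_assoc, div_lt_iff₀ hε]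
    nlinarith
  nlinarith

section Adam

variable {d : ℕ} {L : EuclideanSpace ℝ (Fin d) → ℝ} {ε γ α β : ℝ}
  {Θ m M : ℕ → EuclideanSpace ℝ (Fin d)}

def adamStepSize (ε γ α β : ℝ) (M : ℕ → EuclideanSpace ℝ (Fin d)) (n : ℕ) (i : Fin d) : ℝ :=
  γ * (1 - α) / (1 - α ^ (n + 1)) * regInvSqrt ε (√(1 - β ^ (n + 1)))⁻¹ (M (n + 1)) i

theorem adam_momentum_apply
    (hm : ∀ n : ℕ, m (n + 1) = α • m n + (1 - α) • gradient L (Θ n)) (n : ℕ) (i : Fin d) :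
    m (n + 1) i = α * m n i + (1 - α) * gradient L (Θ n) i := by
  simp [hm n]

theorem adam_secondMoment_apply
    (hM : ∀ n : ℕ, M (n + 1) = β • M n + (1 - β) • sq2 (gradient L (Θ n))) (n : ℕ) (i : Fin d) :
    M (n + 1) i = β * M n i + (1 - β) * gradient L (Θ n) i ^ 2 := by
  simp [hM n]

theorem adam_sub_eq (hα1 : α < 1)
    (hΘ : ∀ n : ℕ, Θ (n + 1) = Θ n - (γ * (1 - α ^ (n + 1))⁻¹) •
      had (regInvSqrt ε ((Real.sqrt (1 - β ^ (n + 1)))⁻¹) (M (n + 1))) (m (n + 1)))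
    (n : ℕ) (i : Fin d) :
    Θ (n + 1) i - Θ n i = -(adamStepSize ε γ α β M n i / (1 - α) * m (n + 1) i) := by
  have hα1' : 1 - α ≠ 0 := (sub_pos.2 hα1).ne'
  rw [hΘ n, adamStepSize]
  simp only [PiLp.sub_apply, PiLp.smul_apply, smul_eq_mul, had_apply]
  field_simp
  ring

theorem adamStepSize_pos (hε : 0 < ε) (hγ : 0 < γ) (hα0 : 0 ≤ α) (hα1 : α < 1)
    (M : ℕ → EuclideanSpace ℝ (Fin d)) (n : ℕ) (i : Fin d) :
    0 < adamStepSize ε γ α β M n i := by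
  have hbias : 0 < 1 - α ^ (n + 1) := sub_pos.2 (pow_lt_one₀ hα0 hα1 n.succ_ne_zero)
  rw [adamStepSize, regInvSqrt_apply]
  exact mul_pos (div_pos (mul_pos hγ (sub_pos.2 hα1)) hbias) (by positivity)

theorem adam_sub_succ_eq (hε : 0 < ε) (hγ : 0 < γ) (hα0 : 0 ≤ α) (hα1 : α < 1)
    (hm : ∀ n : ℕ, m (n + 1) = α • m n + (1 - α) • gradient L (Θ n))
    (hΘ : ∀ n : ℕ, Θ (n + 1) = Θ n - (γ * (1 - α ^ (n + 1))⁻¹) •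
      had (regInvSqrt ε ((Real.sqrt (1 - β ^ (n + 1)))⁻¹) (M (n + 1))) (m (n + 1)))
    (n : ℕ) (i : Fin d) :
    Θ (n + 2) i - Θ (n + 1) i =
      α * (adamStepSize ε γ α β M (n + 1) i / adamStepSize ε γ α β M n i) * (Θ (n + 1) i - Θ n i)
        - adamStepSize ε γ α β M (n + 1) i * gradient L (Θ (n + 1)) i := by
  have hpos := (adamStepSize_pos (β := β) hε hγ hα0 hα1 M n i).ne'
  have hα1' : 1 - α ≠ 0 := (sub_pos.2 hα1).ne'
  rw [show n + 2 = n + 1 + 1 from rfl, adam_sub_eq hα1 hΘ (n + 1) i, adam_sub_eq hα1 hΘ n i,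
    adam_momentum_apply hm (n + 1) i]
  field_simp
  ring

theorem adamStepSize_le (hε : 0 < ε) (hγ : 0 < γ) (hα0 : 0 ≤ α) (hα1 : α < 1) (n : ℕ)
    (i : Fin d) : adamStepSize ε γ α β M n i ≤ γ * (1 - α) / (1 - α ^ (n + 1)) / ε := by
  have hbias : 0 < 1 - α ^ (n + 1) := sub_pos.2 (pow_lt_one₀ hα0 hα1 n.succ_ne_zero)
  rw [adamStepSize, regInvSqrt_apply, div_eq_mul_inv _ ε]
  exact mul_le_mul_of_nonneg_left (inv_anti₀ hε (le_add_of_nonneg_right (by positivity)))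
    (div_nonneg (mul_nonneg hγ.le (sub_nonneg.2 hα1.le)) hbias.le)

theorem adamStepSize_succ_le (hε : 0 < ε) (hγ : 0 < γ) (hα0 : 0 ≤ α) (hα1 : α < 1)
    (hβ0 : 0 < β) (hβ1 : β < 1)
    (hM : ∀ n : ℕ, M (n + 1) = β • M n + (1 - β) • sq2 (gradient L (Θ n))) (n : ℕ) (i : Fin d) :
    adamStepSize ε γ α β M (n + 1) i
      ≤ √(1 - β ^ (n + 2)) / (√β * √(1 - β ^ (n + 1))) * adamStepSize ε γ α β M n i := by
  have hbias : 0 < 1 - α ^ (n + 1) := sub_pos.2 (pow_lt_one₀ hα0 hα1 n.succ_ne_zero)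
  have hbias' : γ * (1 - α) / (1 - α ^ (n + 2)) ≤ γ * (1 - α) / (1 - α ^ (n + 1)) :=
    div_le_div_of_nonneg_left (mul_nonneg hγ.le (sub_nonneg.2 hα1.le)) hbias
      (sub_le_sub_left (pow_le_pow_of_le_one hα0 hα1.le (Nat.le_succ _)) 1)
  have hβpow : 0 < 1 - β ^ (n + 1) := sub_pos.2 (pow_lt_one₀ hβ0.le hβ1 n.succ_ne_zero)
  have hprec := inv_add_mul_sqrt_le hε hβ0 hβpow (b := 1 - β ^ (n + 2))
    (v := M (n + 1) i) (w := M (n + 2) i)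
    (by nlinarith [show β * β ^ (n + 1) = β ^ (n + 2) by ring, pow_pos hβ0 (n + 2)])
    (by rw [adam_secondMoment_apply hM (n + 1) i]; nlinarith [sq_nonneg (gradient L (Θ (n + 1)) i)])
  simp only [adamStepSize, regInvSqrt_apply, show n + 1 + 1 = n + 2 from rfl]
  calc γ * (1 - α) / (1 - α ^ (n + 2)) * (ε + (√(1 - β ^ (n + 2)))⁻¹ * √(M (n + 2) i))⁻¹
      ≤ γ * (1 - α) / (1 - α ^ (n + 1)) * (√(1 - β ^ (n + 2)) / (√β * √(1 - β ^ (n + 1)))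
          * (ε + (√(1 - β ^ (n + 1)))⁻¹ * √(M (n + 1) i))⁻¹) :=
        mul_le_mul hbias' hprec (by positivity)
          (div_nonneg (mul_nonneg hγ.le (sub_nonneg.2 hα1.le)) hbias.le)
    _ = _ := by ring

theorem adam_eventually_contraction {K : ℝ} (hK : 0 < K) (hε : 0 < ε) (hγ : 0 < γ)
    (hα0 : 0 < α) (hα1 : α < 1) (hβ0 : 0 < β) (hβ1 : β < 1) (hαβ : α ^ 2 < β)
    (hγK : γ < α * ε / K)
    (hM : ∀ n : ℕ, M (n + 1) = β • M n + (1 - β) • sq2 (gradient L (Θ n))) :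
    ∀ᶠ n in atTop, ∀ i, α ^ 2 * (adamStepSize ε γ α β M (n + 1) i / adamStepSize ε γ α β M n i)
      + K * adamStepSize ε γ α β M n i ≤ 1 := by
  have hβpow : Tendsto (fun n => β ^ n) atTop (𝓝 0) :=
    tendsto_pow_atTop_nhds_zero_of_lt_one hβ0.le hβ1
  have hαpow : Tendsto (fun n => α ^ (n + 1)) atTop (𝓝 0) :=
    (tendsto_pow_atTop_nhds_zero_of_lt_one hα0.le hα1).comp (tendsto_add_atTop_nat 1)
  have hlim : Tendsto (fun n : ℕ => α ^ 2 * (√(1 - β ^ (n + 2)) / (√β * √(1 - β ^ (n + 1))))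
      + K * (γ * (1 - α) / (1 - α ^ (n + 1)) / ε)) atTop
      (𝓝 (α ^ 2 * (√(1 - 0) / (√β * √(1 - 0))) + K * (γ * (1 - α) / (1 - 0) / ε))) := by
    refine (((tendsto_const_nhds.sub (hβpow.comp (tendsto_add_atTop_nat 2))).sqrt.div
      (tendsto_const_nhds.mul (tendsto_const_nhds.sub
        (hβpow.comp (tendsto_add_atTop_nat 1))).sqrt) ?_).const_mul _).add
      (((tendsto_const_nhds.div (tendsto_const_nhds.sub hαpow) ?_).div_const _).const_mul _)
    · simpa using (Real.sqrt_pos.2 hβ0).ne'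
    · norm_num
  have hlt : α ^ 2 * (√(1 - 0) / (√β * √(1 - 0))) + K * (γ * (1 - α) / (1 - 0) / ε) < 1 := by
    simpa [div_eq_mul_inv] using sq_div_sqrt_add_mul_lt_one hK hε hα0 hα1 hαβ hγK
  filter_upwards [hlim.eventually (eventually_le_nhds hlt)] with n hn i
  have hratio := (div_le_iff₀ (adamStepSize_pos hε hγ hα0.le hα1 M n i)).2
    (adamStepSize_succ_le hε hγ hα0.le hα1 hβ0 hβ1 hM n i)
  calc _ ≤ α ^ 2 * (√(1 - β ^ (n + 2)) / (√β * √(1 - β ^ (n + 1))))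
        + K * (γ * (1 - α) / (1 - α ^ (n + 1)) / ε) := by
        gcongr
        exact adamStepSize_le hε hγ hα0.le hα1 n i
    _ ≤ 1 := hn

theorem adamStepSize_eventually_ge (hε : 0 < ε) (hγ : 0 < γ) (hα0 : 0 ≤ α) (hα1 : α < 1)
    (hβ0 : 0 ≤ β) (hβ1 : β < 1) {C : ℝ} (hC : ∀ᶠ n in atTop, ∀ i, M n i ≤ C) :
    ∃ c > 0, ∀ᶠ n in atTop, ∀ i, c ≤ adamStepSize ε γ α β M n i := by
  refine ⟨γ * (1 - α) * (ε + (√(1 - β))⁻¹ * √C)⁻¹,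
    mul_pos (mul_pos hγ (sub_pos.2 hα1)) (by positivity), ?_⟩
  filter_upwards [(tendsto_add_atTop_nat 1).eventually hC] with n hn i
  have hbias : 0 < 1 - α ^ (n + 1) := sub_pos.2 (pow_lt_one₀ hα0 hα1 n.succ_ne_zero)
  have hβpow : 1 - β ≤ 1 - β ^ (n + 1) :=
    sub_le_sub_left (pow_le_of_le_one hβ0 hβ1.le n.succ_ne_zero) 1
  rw [adamStepSize, regInvSqrt_apply]
  gcongr
  · exact le_div_self (mul_nonneg hγ.le (sub_nonneg.2 hα1.le)) hbias
      (sub_le_self 1 (pow_nonneg hα0 _))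
  · exact hn i

theorem adam_secondMoment_eventually_le (hβ0 : 0 ≤ β) (hβ1 : β ≤ 1)
    (hM : ∀ n : ℕ, M (n + 1) = β • M n + (1 - β) • sq2 (gradient L (Θ n))) {G : ℝ}
    (hG : ∀ᶠ n in atTop, ‖gradient L (Θ n)‖ ≤ G) : ∃ C, ∀ᶠ n in atTop, ∀ i, M n i ≤ C := by
  obtain ⟨N, hN⟩ := eventually_atTop.1 hG
  refine ⟨‖M N‖ + G ^ 2, eventually_atTop.2 ⟨N, fun n hn i => ?_⟩⟩
  obtain ⟨k, rfl⟩ := Nat.exists_eq_add_of_le hn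
  have hu : ∀ j, |gradient L (Θ (N + j)) i ^ 2| ≤ G ^ 2 := fun j => by
    rw [abs_pow, ← Real.norm_eq_abs]
    exact pow_le_pow_left₀ (norm_nonneg _)
      ((PiLp.norm_apply_le _ i).trans (hN (N + j) (Nat.le_add_right N j))) 2
  calc M (N + k) i ≤ |M (N + k) i| := le_abs_self _
    _ ≤ β ^ k * |M N i| + G ^ 2 :=
      abs_le_pow_mul_add_of_ema hβ0 hβ1 (x := fun j => M (N + j) i)
        (fun j => adam_secondMoment_apply hM (N + j) i) hu k
    _ ≤ ‖M N‖ + G ^ 2 := by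
      gcongr
      exact (mul_le_of_le_one_left (abs_nonneg _) (pow_le_one₀ hβ0 hβ1)).trans
        (by simpa using PiLp.norm_apply_le (M N) i)

theorem adam_secondMoment_tendsto_zero (hβ0 : 0 ≤ β) (hβ1 : β < 1)
    (hM : ∀ n : ℕ, M (n + 1) = β • M n + (1 - β) • sq2 (gradient L (Θ n)))
    (hg : Tendsto (fun n => gradient L (Θ n)) atTop (𝓝 0)) : Tendsto M atTop (𝓝 0) := by
  refine tendsto_euclideanSpace_of_forall_apply fun i =>
    tendsto_zero_of_ema hβ0 hβ1 (adam_secondMoment_apply hM · i) ?_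
  simpa using (((PiLp.continuous_apply 2 _ i).tendsto 0).comp hg).pow 2

end Adam

theorem stmt11_general (d : ℕ) (K : ℝ) (hK : 0 < K)
    (L : EuclideanSpace ℝ (Fin d) → ℝ) (hL : ContDiff ℝ 1 L)
    -- lim_{‖θ‖ → ∞} L(θ) = ∞
    (hcoer : Tendsto L (Filter.comap (fun θ : EuclideanSpace ℝ (Fin d) => ‖θ‖) atTop) atTop)
    (hLip : ∀ θ ψ : EuclideanSpace ℝ (Fin d),
      ‖gradient L θ - gradient L ψ‖ ≤ K * ‖θ - ψ‖)
    (ε γ α β : ℝ) (hε : 0 < ε) (hγ : 0 < γ)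
    (hα0 : 0 < α) (hα1 : α < 1) (hβ0 : 0 < β) (hβ1 : β < 1)
    (hαβ : α ^ 2 < β) (hγK : γ < α * ε / K)
    (Θ m M : ℕ → EuclideanSpace ℝ (Fin d))
    (hm : ∀ n : ℕ, m (n + 1) = α • m n + (1 - α) • gradient L (Θ n))
    (hM : ∀ n : ℕ, M (n + 1) = β • M n + (1 - β) • sq2 (gradient L (Θ n)))
    (hΘ : ∀ n : ℕ, Θ (n + 1) = Θ n - (γ * (1 - α ^ (n + 1))⁻¹) •
      had (regInvSqrt ε ((Real.sqrt (1 - β ^ (n + 1)))⁻¹) (M (n + 1))) (m (n + 1))) :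
    Tendsto (fun n => gradient L (Θ n)) atTop (nhds 0) ∧
      Tendsto M atTop (nhds 0) := by
  obtain ⟨⟨R, hR⟩, hsum⟩ := heavyBall_eventually_bounded_and_summable
    (hL.differentiable one_ne_zero) hcoer hLip (adamStepSize_pos hε hγ hα0.le hα1 M)
    (adam_eventually_contraction hK hε hγ hα0 hα1 hβ0 hβ1 hαβ hγK hM)
    (adam_sub_succ_eq hε hγ hα0.le hα1 hm hΘ)
  obtain ⟨C, hC⟩ := adam_secondMoment_eventually_le hβ0.le hβ1.le hM
    (hR.mono fun n hn => (norm_le_norm_zero_add_of_lipschitz hLip (Θ n)).trans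
      (add_le_add_right (mul_le_mul_of_nonneg_left hn hK.le) _))
  obtain ⟨c, hc, hstep⟩ := adamStepSize_eventually_ge hε hγ hα0.le hα1 hβ0.le hβ1 hC
  have hg := tendsto_zero_of_summable_sum_mul_sq hc hstep hsum
  exact ⟨hg, adam_secondMoment_tendsto_zero hβ0.le hβ1 hM hg⟩

/-- Convergence of the gradients to zero along the Adam trajectory. -/
theorem stmt11 (d : ℕ) (hd : 0 < d) (K : ℝ) (hK : 0 < K)
    (L : EuclideanSpace ℝ (Fin d) → ℝ) (hL : ContDiff ℝ 1 L)
    -- lim_{‖θ‖ → ∞} L(θ) = ∞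
    (hcoer : Tendsto L (Filter.comap (fun θ : EuclideanSpace ℝ (Fin d) => ‖θ‖) atTop) atTop)
    (hLip : ∀ θ ψ : EuclideanSpace ℝ (Fin d),
      ‖gradient L θ - gradient L ψ‖ ≤ K * ‖θ - ψ‖)
    (ε γ α β : ℝ) (hε : 0 < ε) (hγ : 0 < γ)
    (hα0 : 0 < α) (hα1 : α < 1) (hβ0 : 0 < β) (hβ1 : β < 1)
    (hαβ : α ^ 2 < β) (hγK : γ < α * ε / K)
    (Θ m M : ℕ → EuclideanSpace ℝ (Fin d))
    (hm : ∀ n : ℕ, m (n + 1) = α • m n + (1 - α) • gradient L (Θ n))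
    (hM : ∀ n : ℕ, M (n + 1) = β • M n + (1 - β) • sq2 (gradient L (Θ n)))
    (hΘ : ∀ n : ℕ, Θ (n + 1) = Θ n - (γ * (1 - α ^ (n + 1))⁻¹) •
      had (regInvSqrt ε ((Real.sqrt (1 - β ^ (n + 1)))⁻¹) (M (n + 1))) (m (n + 1))) :
    Tendsto (fun n => gradient L (Θ n)) atTop (nhds 0) ∧
      Tendsto M atTop (nhds 0) :=
  stmt11_general d K hK L hL hcoer hLip ε γ α β hε hγ hα0 hα1 hβ0 hβ1 hαβ hγK Θ m M hm hM hΘ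
end
end
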